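/- Let U ⊆ ℝ² be open bounded with 0 ∈ U, φ: [0,T] × cl(U) → ℝ² continuous with φ(0,·) = id and 0 ∉ φ([0,T] × ∂U), and define f_T, F_T as usual. If Σ(F_T, ∂U) = ∅ (i.e., the convex hull of the rotation set of F_T on ∂U contains no integer), then deg(f_T, U, 0) = 1, and in particular φ(T,·) has a fixed point in U. -/

import Mathlib

noncomputable section

open Set Metric Bornology

/-- Clockwise polar coordinates `Ψ(θ, r) = (r cos θ, -r sin θ)`. -/
def PsiP (p : ℝ × ℝ) : ℝ × ℝ := (p.2 * Real.cos p.1, -(p.2 * Real.sin p.1))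

/-- The set `Ψ⁻¹(E)` in the open half-plane (points with positive radius mapping into `E`). -/
def preE (E : Set (ℝ × ℝ)) : Set (ℝ × ℝ) := {p : ℝ × ℝ | 0 < p.2 ∧ PsiP p ∈ E}

/-- `F` is `2π`-periodic in the first variable, on `Ψ⁻¹(E)`. -/
def PerOn (F : ℝ × ℝ → ℝ × ℝ) (E : Set (ℝ × ℝ)) : Prop :=
  ∀ p : ℝ × ℝ, p ∈ preE E → F (p.1 + 2 * Real.pi, p.2) = F p

/-- The rotation set `rot(F, E) = {F^θ(y)/(2π) : y ∈ Ψ⁻¹(E)}`. -/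
def rotSet (F : ℝ × ℝ → ℝ × ℝ) (E : Set (ℝ × ℝ)) : Set ℝ :=
  {t : ℝ | ∃ p ∈ preE E, t = (F p).1 / (2 * Real.pi)}

/-- `Σ(F, E) = ℤ ∩ conv (rot(F, E))`. -/
def SigmaSet (F : ℝ × ℝ → ℝ × ℝ) (E : Set (ℝ × ℝ)) : Set ℤ :=
  {n : ℤ | (n : ℝ) ∈ convexHull ℝ (rotSet F E)}

/-- `ν_i = (2πi, 0)`. -/
def nu (i : ℤ) : ℝ × ℝ := (2 * Real.pi * i, 0)

/-- A Brouwer degree theory on the plane, characterized by the classical axioms: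
normalization, dependence only on boundary values, homotopy invariance, additivity,
and the solution property. -/
structure DegTheory where
  deg : (ℝ × ℝ → ℝ × ℝ) → Set (ℝ × ℝ) → ℝ × ℝ → ℤ
  deg_id : ∀ (U : Set (ℝ × ℝ)) (v : ℝ × ℝ), IsOpen U → IsBounded U → v ∈ U →
    deg id U v = 1
  deg_congr : ∀ (g₁ g₂ : ℝ × ℝ → ℝ × ℝ) (U : Set (ℝ × ℝ)) (v : ℝ × ℝ),
    IsOpen U → IsBounded U → ContinuousOn g₁ (closure U) → ContinuousOn g₂ (closure U) →
    (∀ x ∈ frontier U, g₁ x = g₂ x) → (∀ x ∈ frontier U, g₁ x ≠ v) →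
    deg g₁ U v = deg g₂ U v
  deg_homotopy : ∀ (H : (ℝ × ℝ) × ℝ → ℝ × ℝ) (U : Set (ℝ × ℝ)) (v : ℝ × ℝ),
    IsOpen U → IsBounded U →
    ContinuousOn H ((closure U) ×ˢ Icc (0:ℝ) 1) →
    (∀ x ∈ frontier U, ∀ t ∈ Icc (0:ℝ) 1, H (x, t) ≠ v) →
    deg (fun x => H (x, 0)) U v = deg (fun x => H (x, 1)) U v
  deg_additive : ∀ (g : ℝ × ℝ → ℝ × ℝ) (U U₁ U₂ : Set (ℝ × ℝ)) (v : ℝ × ℝ),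
    IsOpen U → IsOpen U₁ → IsOpen U₂ → IsBounded U →
    U₁ ⊆ U → U₂ ⊆ U → Disjoint U₁ U₂ → ContinuousOn g (closure U) →
    (∀ x ∈ closure U \ (U₁ ∪ U₂), g x ≠ v) →
    deg g U v = deg g U₁ v + deg g U₂ v
  deg_exists : ∀ (g : ℝ × ℝ → ℝ × ℝ) (U : Set (ℝ × ℝ)) (v : ℝ × ℝ),
    IsOpen U → IsBounded U → ContinuousOn g (closure U) →
    deg g U v ≠ 0 → ∃ x ∈ U, g x = v

/-- `g : ℝ² → ℝ²` represents `F_ext ∘ Ψ⁻¹` for an admissible extension `F_ext` of `F`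
(`F` being defined on `Ψ⁻¹(∂U)`): `g` is continuous on the plane and agrees with
`F ∘ Ψ⁻¹` on `∂U`.  (Via `F_ext = g ∘ Ψ`, this is equivalent to the existence of a
continuous extension `F_ext` of `F` to the closed half-plane which is `2π`-periodic in
the first variable and constant on the line `r = 0`.) -/
def IsDExt (F : ℝ × ℝ → ℝ × ℝ) (U : Set (ℝ × ℝ)) (g : ℝ × ℝ → ℝ × ℝ) : Prop :=
  Continuous g ∧ ∀ p : ℝ × ℝ, p ∈ preE (frontier U) → g (PsiP p) = F p

/-- Euclidean open ball of radius `ρ` about the origin of the plane. -/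
def ball2 (ρ : ℝ) : Set (ℝ × ℝ) := {x : ℝ × ℝ | x.1 ^ 2 + x.2 ^ 2 < ρ ^ 2}

/-- Euclidean circle of radius `ρ` about the origin of the plane. -/
def sphere2 (ρ : ℝ) : Set (ℝ × ℝ) := {x : ℝ × ℝ | x.1 ^ 2 + x.2 ^ 2 = ρ ^ 2}

/-- Euclidean norm on the plane. -/
def sqnorm (x : ℝ × ℝ) : ℝ := Real.sqrt (x.1 ^ 2 + x.2 ^ 2)

/-- `Φ` is the (unique) lift, through the clockwise polar coordinates `Ψ`, of the
evolution map `φ` on `[0,T] × Ψ⁻¹(S)`: it is continuous, starts from the identity,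
projects to `φ` via `Ψ`, stays in the open half-plane, and is equivariant under the
deck transformation `θ ↦ θ + 2π`. -/
def IsLiftOn (φ : ℝ → ℝ × ℝ → ℝ × ℝ) (Φ : ℝ → ℝ × ℝ → ℝ × ℝ) (T : ℝ)
    (S : Set (ℝ × ℝ)) : Prop :=
  ContinuousOn (fun q : ℝ × (ℝ × ℝ) => Φ q.1 q.2) (Icc 0 T ×ˢ preE S) ∧
  (∀ p ∈ preE S, Φ 0 p = p) ∧
  (∀ t ∈ Icc 0 T, ∀ p ∈ preE S,
    PsiP (Φ t p) = φ t (PsiP p) ∧ 0 < (Φ t p).2 ∧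
    Φ t (p.1 + 2 * Real.pi, p.2) = ((Φ t p).1 + 2 * Real.pi, (Φ t p).2))

/-!
The straight-line homotopy `s • φ(T, ·) - id`, `s ∈ [0, 1]`, joins `-id` to `f_T`. A zero on
`∂U` would make `φ(T, x)` a positive multiple of `x`; lifting through `Ψ`, the angles of
`Φ(T, p)` and `p` would then differ by some `2πk`, i.e. `k ∈ rot(F_T, ∂U) ⊆ Σ(F_T, ∂U)`. Hence
`deg(f_T, U, 0) = deg(-id, U, 0)`, and `-id`, the rotation by `π`, is homotopic to `id`.
-/

lemma PsiP_fst_sq_add_snd_sq (p : ℝ × ℝ) : (PsiP p).1 ^ 2 + (PsiP p).2 ^ 2 = p.2 ^ 2 := by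
  simp only [PsiP]
  linear_combination p.2 ^ 2 * Real.cos_sq_add_sin_sq p.1

lemma smul_PsiP (c : ℝ) (p : ℝ × ℝ) : c • PsiP p = PsiP (p.1, c * p.2) := by
  simp only [PsiP, Prod.smul_mk, smul_eq_mul]
  ext <;> ring

lemma exists_PsiP_eq {x : ℝ × ℝ} (hx : x ≠ 0) : ∃ p : ℝ × ℝ, 0 < p.2 ∧ PsiP p = x := by
  set z : ℂ := ⟨x.1, -x.2⟩
  have hz : z ≠ 0 := fun h ↦ hx <| Prod.ext (congrArg Complex.re h) (by
    simpa [z] using congrArg Complex.im h)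
  refine ⟨(z.arg, ‖z‖), norm_pos_iff.mpr hz, ?_⟩
  simp only [PsiP, Complex.norm_mul_cos_arg, Complex.norm_mul_sin_arg, z, neg_neg]

lemma PsiP_inj_mod_two_pi {p q : ℝ × ℝ} (hp : 0 < p.2) (hq : 0 < q.2) (h : PsiP p = PsiP q) :
    p.2 = q.2 ∧ ∃ k : ℤ, p.1 - q.1 = 2 * Real.pi * k := by
  have hr : p.2 = q.2 := by
    have := PsiP_fst_sq_add_snd_sq p
    rw [h, PsiP_fst_sq_add_snd_sq] at this
    exact (pow_left_inj₀ hp.le hq.le two_ne_zero).mp this.symm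
  have h₁ := congrArg Prod.fst h
  have h₂ := congrArg Prod.snd h
  simp only [PsiP, hr, neg_inj] at h₁ h₂
  exact ⟨hr, Real.Angle.angle_eq_iff_two_pi_dvd_sub.mp <| Real.Angle.cos_sin_inj
    (mul_left_cancel₀ hq.ne' h₁) (mul_left_cancel₀ hq.ne' h₂)⟩

lemma int_notMem_rotSet_of_sigmaSet_eq_empty {F : ℝ × ℝ → ℝ × ℝ} {E : Set (ℝ × ℝ)}
    (h : SigmaSet F E = ∅) (k : ℤ) : (k : ℝ) ∉ rotSet F E := fun hk ↦
  (h ▸ subset_convexHull ℝ _ hk : k ∈ (∅ : Set ℤ))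

theorem IsLiftOn.ne_pos_smul {φ Φ : ℝ → ℝ × ℝ → ℝ × ℝ} {T t : ℝ} {S : Set (ℝ × ℝ)}
    (hΦ : IsLiftOn φ Φ T S) (ht : t ∈ Icc 0 T)
    (hrot : ∀ k : ℤ, (k : ℝ) ∉ rotSet (fun p ↦ Φ t p - p) S)
    {x : ℝ × ℝ} (hx : x ∈ S) (hx0 : x ≠ 0) {c : ℝ} (hc : 0 < c) : φ t x ≠ c • x := by
  intro h
  obtain ⟨p, hp, rfl⟩ := exists_PsiP_eq hx0
  have hpS : p ∈ preE S := ⟨hp, hx⟩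
  obtain ⟨hproj, hpos, -⟩ := hΦ.2.2 t ht p hpS
  rw [h, smul_PsiP] at hproj
  obtain ⟨-, k, hk⟩ := PsiP_inj_mod_two_pi hpos (mul_pos hc hp) hproj
  refine hrot k ⟨p, hpS, ?_⟩
  simp only [Prod.fst_sub, hk]
  field_simp

namespace DegTheory

variable (D : DegTheory) {U : Set (ℝ × ℝ)}

theorem deg_neg_eq_one (hU : IsOpen U) (hUb : IsBounded U) (h0 : (0 : ℝ × ℝ) ∈ U) :
    D.deg (fun x ↦ -x) U 0 = 1 := by
  let R : (ℝ × ℝ) × ℝ → ℝ × ℝ := fun q ↦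
    (Real.cos (Real.pi * q.2) * q.1.1 - Real.sin (Real.pi * q.2) * q.1.2,
     Real.sin (Real.pi * q.2) * q.1.1 + Real.cos (Real.pi * q.2) * q.1.2)
  have hR : Continuous R := by fun_prop
  have hR_ne : ∀ x ∈ frontier U, ∀ t ∈ Icc (0 : ℝ) 1, R (x, t) ≠ 0 := by
    intro x hx t _ h
    have hnorm : (R (x, t)).1 ^ 2 + (R (x, t)).2 ^ 2 = x.1 ^ 2 + x.2 ^ 2 := by
      linear_combination (x.1 ^ 2 + x.2 ^ 2) * Real.sin_sq_add_cos_sq (Real.pi * t)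
    rw [h] at hnorm
    refine (disjoint_frontier_iff_isOpen.mpr hU).ne_of_mem hx h0 (Prod.ext ?_ ?_) <;>
      simp only [Prod.fst_zero, Prod.snd_zero] at hnorm ⊢ <;>
      nlinarith [sq_nonneg x.1, sq_nonneg x.2]
  have h := D.deg_homotopy R U 0 hU hUb hR.continuousOn hR_ne
  have hR0 : (fun x ↦ R (x, 0)) = id := by funext x; simp [R]
  have hR1 : (fun x ↦ R (x, 1)) = fun x ↦ -x := by funext x; simp [R, Prod.ext_iff]
  rw [hR0, hR1, D.deg_id U 0 hU hUb h0] at h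
  exact h.symm

theorem deg_sub_id_eq_one {g : ℝ × ℝ → ℝ × ℝ} (hU : IsOpen U) (hUb : IsBounded U)
    (h0 : (0 : ℝ × ℝ) ∈ U) (hg : ContinuousOn g (closure U))
    (hray : ∀ x ∈ frontier U, ∀ c : ℝ, 0 < c → g x ≠ c • x) :
    D.deg (fun x ↦ g x - x) U 0 = 1 := by
  let H : (ℝ × ℝ) × ℝ → ℝ × ℝ := fun q ↦ q.2 • g q.1 - q.1
  have hH : ContinuousOn H (closure U ×ˢ Icc (0 : ℝ) 1) :=
    (continuous_snd.continuousOn.smul (hg.comp continuous_fst.continuousOn fun _ hq ↦ hq.1)).sub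
      continuous_fst.continuousOn
  have hH_ne : ∀ x ∈ frontier U, ∀ s ∈ Icc (0 : ℝ) 1, H (x, s) ≠ 0 := by
    intro x hx s hs h
    have hsx : s • g x = x := sub_eq_zero.mp h
    have hx0 : x ≠ 0 := (disjoint_frontier_iff_isOpen.mpr hU).ne_of_mem hx h0
    rcases hs.1.eq_or_lt with rfl | hs0
    · exact hx0 (by simpa using hsx.symm)
    · exact hray x hx s⁻¹ (inv_pos.mpr hs0) ((inv_smul_eq_iff₀ hs0.ne').mpr hsx.symm).symm
  have h := D.deg_homotopy H U 0 hU hUb hH hH_ne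
  simp only [H, zero_smul, zero_sub, one_smul] at h
  rw [← h, D.deg_neg_eq_one hU hUb h0]

end DegTheory

theorem statement13_general (D : DegTheory) (T : ℝ) (hT : 0 ≤ T)
    (U : Set (ℝ × ℝ)) (hU : IsOpen U) (hUb : IsBounded U) (h0 : (0 : ℝ × ℝ) ∈ U)
    (φ Φ : ℝ → ℝ × ℝ → ℝ × ℝ)
    (hφc : ContinuousOn (fun q : ℝ × (ℝ × ℝ) => φ q.1 q.2)
      (Set.Icc 0 T ×ˢ closure U))
    (hΦ : IsLiftOn φ Φ T (frontier U))
    (hSigma : SigmaSet (fun p => Φ T p - p) (frontier U) = ∅) :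
    D.deg (fun x => φ T x - x) U 0 = 1 ∧ ∃ x ∈ U, φ T x = x := by
  have hTT : T ∈ Icc 0 T := ⟨hT, le_rfl⟩
  have hφT : ContinuousOn (φ T) (closure U) :=
    hφc.comp (continuousOn_const.prodMk continuousOn_id) fun _ hx ↦ ⟨hTT, hx⟩
  have hdeg : D.deg (fun x => φ T x - x) U 0 = 1 :=
    D.deg_sub_id_eq_one hU hUb h0 hφT fun x hx _ hc ↦
      hΦ.ne_pos_smul hTT (int_notMem_rotSet_of_sigmaSet_eq_empty hSigma) hx
        ((disjoint_frontier_iff_isOpen.mpr hU).ne_of_mem hx h0) hc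
  obtain ⟨x, hxU, hx⟩ :=
    D.deg_exists _ U 0 hU hUb (hφT.sub continuousOn_id) (hdeg ▸ one_ne_zero)
  exact ⟨hdeg, x, hxU, sub_eq_zero.mp hx⟩

/-- if `0 ∈ U` and `Σ(F_T, ∂U) = ∅` (the convex hull of the rotation set
of `F_T` on `∂U` contains no integer), then `deg(f_T, U, 0) = 1`; in particular
`φ(T,·)` has a fixed point in `U`. -/
theorem statement13 (D : DegTheory) (T : ℝ) (hT : 0 ≤ T)
    (U : Set (ℝ × ℝ)) (hU : IsOpen U) (hUb : IsBounded U) (h0 : (0 : ℝ × ℝ) ∈ U)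
    (φ Φ : ℝ → ℝ × ℝ → ℝ × ℝ)
    (hφc : ContinuousOn (fun q : ℝ × (ℝ × ℝ) => φ q.1 q.2)
      (Set.Icc 0 T ×ˢ closure U))
    (hφ0 : ∀ x ∈ closure U, φ 0 x = x)
    (hφne : ∀ t ∈ Set.Icc 0 T, ∀ x ∈ frontier U, φ t x ≠ 0)
    (hΦ : IsLiftOn φ Φ T (frontier U))
    (hSigma : SigmaSet (fun p => Φ T p - p) (frontier U) = ∅) :
    D.deg (fun x => φ T x - x) U 0 = 1 ∧ ∃ x ∈ U, φ T x = x :=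
  statement13_general D T hT U hU hUb h0 φ Φ hφc hΦ hSigma
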